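/- arXiv:1907.02717 — 2 statements merged into one kernel-verified Lean document; each statement's English description precedes it below -/
import Mathlib

section
/- Consider a weighted undirected graph on vertex set V = X₁ ∪ X₂ ∪ X₃ (disjoint, with |X₁| = N₁, |X₂| = N₂, |X₃| = N₃, all positive), where there are no edges between X₁ and X₃. Suppose every vertex has at most q neighbors and every edge weight is at most w_max. Then the algebraic connectivity (second-smallest Laplacian eigenvalue) satisfies λ₂ ≤ q·w_max·(N₃²N₂ + N₁²N₂)/(N₃²N₁ + N₁²N₃). -/
open Matrix

/-- Sorted (ascending) eigenvalues of a Hermitian matrix. -/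
noncomputable def sortedEig {N : ℕ} {L : Matrix (Fin N) (Fin N) ℝ}
    (hL : L.IsHermitian) : Fin N → ℝ :=
  hL.eigenvalues ∘ Tuple.sort hL.eigenvalues

/-- Weighted graph Laplacian. -/
noncomputable def lap {N : ℕ} (w : Fin N → Fin N → ℝ) : Matrix (Fin N) (Fin N) ℝ :=
  Matrix.of fun i j => if i = j then ∑ k, w i k else - w i j

/-!
Courant–Fischer on the plane spanned by the all-ones vector, which the Laplacian kills, and the
test vector `v` gives `λ₂ · ‖v‖² ≤ max 0 (vᵀ L v)`, with `‖v‖² = N₃²N₁ + N₁²N₃`. Since `v` vanishes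
on `X₂` and, for want of `X₁`–`X₃` edges, is constant along every edge avoiding `X₂`, the quadratic
form `vᵀ L v = ∑ᵢⱼ wᵢⱼ vᵢ (vᵢ - vⱼ)` only collects the edges into `X₂`. Each vertex of `X₂` has
weighted degree at most `q · w_max`, so `vᵀ L v ≤ N₂ · q · w_max · (N₃² + N₁²)`.
-/

namespace Matrix.IsHermitian

lemma dotProduct_mulVec_comm {n : Type*} [Fintype n] {L : Matrix n n ℝ} (hL : L.IsHermitian)
    (x y : n → ℝ) : x ⬝ᵥ (L *ᵥ y) = (L *ᵥ x) ⬝ᵥ y := by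
  rw [dotProduct_mulVec, ← mulVec_transpose, ← conjTranspose_eq_transpose_of_trivial, hL.eq]

variable {n : Type*} [Fintype n] [DecidableEq n] {L : Matrix n n ℝ} (hL : L.IsHermitian)

lemma dotProduct_eq_sum_eigenvectorBasis (x y : n → ℝ) :
    x ⬝ᵥ y = ∑ i, (hL.eigenvectorBasis i ⬝ᵥ x) * (hL.eigenvectorBasis i ⬝ᵥ y) := by
  have := hL.eigenvectorBasis.sum_inner_mul_inner (WithLp.toLp 2 x) (WithLp.toLp 2 y)
  simp only [EuclideanSpace.inner_eq_star_dotProduct, star_trivial] at this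
  rw [dotProduct_comm, ← this]
  exact Finset.sum_congr rfl fun i _ => by rw [dotProduct_comm y]

lemma eigenvectorBasis_dotProduct_mulVec (i : n) (x : n → ℝ) :
    hL.eigenvectorBasis i ⬝ᵥ (L *ᵥ x) = hL.eigenvalues i * (hL.eigenvectorBasis i ⬝ᵥ x) := by
  rw [hL.dotProduct_mulVec_comm, hL.mulVec_eigenvectorBasis, smul_dotProduct, smul_eq_mul]

lemma dotProduct_mulVec_eq_sum (x : n → ℝ) :
    x ⬝ᵥ (L *ᵥ x) = ∑ i, hL.eigenvalues i * (hL.eigenvectorBasis i ⬝ᵥ x) ^ 2 := by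
  rw [hL.dotProduct_eq_sum_eigenvectorBasis]
  exact Finset.sum_congr rfl fun i _ => by rw [eigenvectorBasis_dotProduct_mulVec]; ring

lemma dotProduct_self_eq_sum (x : n → ℝ) :
    x ⬝ᵥ x = ∑ i, (hL.eigenvectorBasis i ⬝ᵥ x) ^ 2 := by
  rw [hL.dotProduct_eq_sum_eigenvectorBasis]
  simp only [sq]

section Sorted

variable {N : ℕ} {L : Matrix (Fin N) (Fin N) ℝ} (hL : L.IsHermitian)

lemma sortedEig_mul_dotProduct_self_le (k : Fin N) (x : Fin N → ℝ)
    (hx : ∀ j < k, hL.eigenvectorBasis (Tuple.sort hL.eigenvalues j) ⬝ᵥ x = 0) :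
    sortedEig hL k * (x ⬝ᵥ x) ≤ x ⬝ᵥ (L *ᵥ x) := by
  set σ := Tuple.sort hL.eigenvalues
  rw [hL.dotProduct_mulVec_eq_sum, hL.dotProduct_self_eq_sum, Finset.mul_sum]
  refine Finset.sum_le_sum fun i _ => ?_
  obtain ⟨j, rfl⟩ := σ.surjective i
  rcases lt_or_ge j k with hjk | hkj
  · simp [hx j hjk]
  · exact mul_le_mul_of_nonneg_right (Tuple.monotone_sort hL.eigenvalues hkj) (sq_nonneg _)

lemma sortedEig_one_mul_dotProduct_self_le (hN : 2 ≤ N) {e v : Fin N → ℝ} (he : e ≠ 0)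
    (hLe : L *ᵥ e = 0) (hev : e ⬝ᵥ v = 0) :
    sortedEig hL ⟨1, by omega⟩ * (v ⬝ᵥ v) ≤ max 0 (v ⬝ᵥ (L *ᵥ v)) := by
  set μ := sortedEig hL ⟨1, by omega⟩
  set u := hL.eigenvectorBasis (Tuple.sort hL.eigenvalues ⟨0, by omega⟩)
  have hu : ∀ x : Fin N → ℝ, u ⬝ᵥ x = 0 → μ * (x ⬝ᵥ x) ≤ x ⬝ᵥ (L *ᵥ x) := fun x hx =>
    hL.sortedEig_mul_dotProduct_self_le _ x fun j hj => by
      rwa [show j = ⟨0, by omega⟩ from Fin.ext (Nat.lt_one_iff.mp hj)]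
  have hsq (x : Fin N → ℝ) : 0 ≤ x ⬝ᵥ x := Finset.sum_nonneg fun i _ => mul_self_nonneg (x i)
  rcases le_or_gt μ 0 with hμ | hμ
  · exact (mul_nonpos_of_nonpos_of_nonneg hμ (hsq v)).trans (le_max_left _ _)
  refine le_max_of_le_right ?_
  have hee : 0 < e ⬝ᵥ e := (hsq e).lt_of_ne' (dotProduct_self_eq_zero.not.mpr he)
  set a := u ⬝ᵥ e
  set b := u ⬝ᵥ v
  have ha : a ≠ 0 := by
    intro ha
    have := hu e ha
    rw [hLe, dotProduct_zero] at this
    nlinarith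
  have hLv : e ⬝ᵥ (L *ᵥ v) = 0 := by rw [hL.dotProduct_mulVec_comm, hLe, zero_dotProduct]
  have key := hu (b • e - a • v) <| by
    simp only [dotProduct_sub, dotProduct_smul, smul_eq_mul]
    ring
  have hxx : (b • e - a • v) ⬝ᵥ (b • e - a • v) = b ^ 2 * (e ⬝ᵥ e) + a ^ 2 * (v ⬝ᵥ v) := by
    simp only [dotProduct_sub, sub_dotProduct, dotProduct_smul, smul_dotProduct, smul_eq_mul,
      dotProduct_comm v e, hev]
    ring
  have hxLx : (b • e - a • v) ⬝ᵥ (L *ᵥ (b • e - a • v)) = a ^ 2 * (v ⬝ᵥ (L *ᵥ v)) := by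
    simp only [mulVec_sub, mulVec_smul, hLe, smul_zero, zero_sub, dotProduct_neg, sub_dotProduct,
      dotProduct_smul, smul_dotProduct, hLv, smul_eq_mul]
    ring
  rw [hxx, hxLx] at key
  have ha2 : 0 < a ^ 2 := by positivity
  nlinarith [mul_nonneg hμ.le (mul_nonneg (sq_nonneg b) hee.le)]

end Sorted

end Matrix.IsHermitian

open Finset

lemma Finset.sum_le_card_support_mul {ι : Type*} [Fintype ι] {f : ι → ℝ} {c : ℝ} {q : ℕ}
    (hf : ∀ j, f j ≤ c) (hc : 0 ≤ c) (hq : #{j | f j ≠ 0} ≤ q) : ∑ j, f j ≤ q * c := by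
  rw [← sum_filter_ne_zero]
  calc ∑ j ∈ {j | f j ≠ 0}, f j ≤ #{j | f j ≠ 0} * c := by
        simpa using sum_le_card_nsmul _ _ _ fun j _ => hf j
    _ ≤ q * c := by gcongr

section Laplacian

variable {N : ℕ} {w : Fin N → Fin N → ℝ}

lemma lap_eq_diagonal_sub (hdiag : ∀ i, w i i = 0) :
    lap w = diagonal (fun i => ∑ k, w i k) - of w := by
  ext i j
  by_cases h : i = j
  · subst h; simp [lap, hdiag]
  · simp [lap, h]

lemma lap_mulVec_apply (hdiag : ∀ i, w i i = 0) (v : Fin N → ℝ) (i : Fin N) :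
    (lap w *ᵥ v) i = ∑ j, w i j * (v i - v j) := by
  rw [lap_eq_diagonal_sub hdiag, sub_mulVec, Pi.sub_apply, mulVec_diagonal]
  simp only [mulVec, dotProduct, of_apply, mul_sub, sum_sub_distrib, sum_mul]

lemma lap_mulVec_const (hdiag : ∀ i, w i i = 0) (c : ℝ) : lap w *ᵥ (fun _ => c) = 0 := by
  ext i
  simp [lap_mulVec_apply hdiag]

lemma dotProduct_lap_mulVec_le (hsym : ∀ i j, w i j = w j i) (hnn : ∀ i j, 0 ≤ w i j)
    (hdiag : ∀ i, w i i = 0) {R M : ℝ} (hR : ∀ i, ∑ j, w i j ≤ R) (S : Finset (Fin N))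
    {v : Fin N → ℝ} (hvS : ∀ i ∈ S, v i = 0)
    (hv : ∀ i j, i ∉ S → j ∉ S → w i j ≠ 0 → v i = v j) (hM : ∀ i, v i ^ 2 ≤ M) :
    v ⬝ᵥ (lap w *ᵥ v) ≤ #S * R * M := by
  have hterm : ∀ i j, v i * (w i j * (v i - v j)) = if j ∈ S then w j i * v i ^ 2 else 0 := by
    intro i j
    split_ifs with hj
    · rw [hvS j hj, hsym]; ring
    by_cases hi : i ∈ S
    · simp [hvS i hi]
    by_cases hw : w i j = 0
    · simp [hw]
    · simp [hv i j hi hj hw]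
  calc v ⬝ᵥ (lap w *ᵥ v) = ∑ j ∈ S, ∑ i, w j i * v i ^ 2 := by
        simp only [dotProduct, lap_mulVec_apply hdiag, mul_sum, hterm, sum_ite_mem, univ_inter]
        exact sum_comm
    _ ≤ ∑ j ∈ S, R * M := by
        refine sum_le_sum fun j hj => ?_
        have hM0 : 0 ≤ M := (sq_nonneg _).trans (hM j)
        calc ∑ i, w j i * v i ^ 2 ≤ ∑ i, w j i * M := by
              gcongr with i; exacts [hnn j i, hM i]
          _ ≤ R * M := by rw [← sum_mul]; exact mul_le_mul_of_nonneg_right (hR j) hM0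
    _ = #S * R * M := by rw [sum_const, nsmul_eq_mul, mul_assoc]

end Laplacian

section BottleneckVector

variable {ι : Type*} [DecidableEq ι] (X₁ X₃ : Finset ι)

noncomputable def bottleneckVector : ι → ℝ := fun i =>
  (if i ∈ X₁ then (#X₃ : ℝ) else 0) - (if i ∈ X₃ then (#X₁ : ℝ) else 0)

lemma sum_bottleneckVector [Fintype ι] : ∑ i, bottleneckVector X₁ X₃ i = 0 := by
  simp [bottleneckVector, sum_sub_distrib, sum_ite_mem, mul_comm]

variable {X₁ X₃}

lemma bottleneckVector_sq (h13 : Disjoint X₁ X₃) (i : ι) :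
    bottleneckVector X₁ X₃ i ^ 2 =
      (if i ∈ X₁ then (#X₃ : ℝ) ^ 2 else 0) + (if i ∈ X₃ then (#X₁ : ℝ) ^ 2 else 0) := by
  by_cases h1 : i ∈ X₁
  · simp [bottleneckVector, h1, disjoint_left.mp h13 h1]
  · by_cases h3 : i ∈ X₃ <;> simp [bottleneckVector, h1, h3]

lemma dotProduct_self_bottleneckVector [Fintype ι] (h13 : Disjoint X₁ X₃) :
    bottleneckVector X₁ X₃ ⬝ᵥ bottleneckVector X₁ X₃ =
      (#X₃ : ℝ) ^ 2 * #X₁ + (#X₁ : ℝ) ^ 2 * #X₃ := by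
  simp only [dotProduct, ← sq, bottleneckVector_sq h13, sum_add_distrib, sum_ite_mem, univ_inter,
    sum_const, nsmul_eq_mul]
  ring

lemma bottleneckVector_sq_le (h13 : Disjoint X₁ X₃) (i : ι) :
    bottleneckVector X₁ X₃ i ^ 2 ≤ (#X₃ : ℝ) ^ 2 + (#X₁ : ℝ) ^ 2 := by
  rw [bottleneckVector_sq h13]
  apply add_le_add <;> split_ifs <;> simp

lemma bottleneckVector_eq_zero {i : ι} (hi1 : i ∉ X₁) (hi3 : i ∉ X₃) :
    bottleneckVector X₁ X₃ i = 0 := by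
  simp [bottleneckVector, hi1, hi3]

lemma bottleneckVector_eq_of_same_side {X₂ : Finset ι} [Fintype ι] (h13 : Disjoint X₁ X₃)
    (hcover : X₁ ∪ X₂ ∪ X₃ = univ) {i j : ι} (hi : i ∉ X₂) (hj : j ∉ X₂)
    (hij : i ∈ X₁ → j ∉ X₃) (hji : j ∈ X₁ → i ∉ X₃) :
    bottleneckVector X₁ X₃ i = bottleneckVector X₁ X₃ j := by
  have hcov (k : ι) (hk : k ∉ X₂) : k ∈ X₁ ∨ k ∈ X₃ := by
    have := hcover ▸ mem_univ k
    simp only [mem_union, hk, or_false] at this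
    exact this
  rcases hcov i hi with hi1 | hi3 <;> rcases hcov j hj with hj1 | hj3
  · simp [bottleneckVector, hi1, hj1, disjoint_left.mp h13 hi1, disjoint_left.mp h13 hj1]
  · exact absurd hj3 (hij hi1)
  · exact absurd hi3 (hji hj1)
  · simp [bottleneckVector, hi3, hj3, disjoint_right.mp h13 hi3, disjoint_right.mp h13 hj3]

end BottleneckVector

/-- Bottleneck bound: if the vertex set is partitioned into X₁, X₂, X₃ with no
edges between X₁ and X₃, degrees at most q and weights at most w_max, then
λ₂ ≤ q·w_max·(N₃²N₂ + N₁²N₂)/(N₃²N₁ + N₁²N₃). -/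
theorem stmt1 {N q : ℕ} (hN : 2 ≤ N) (wmax : ℝ)
    (w : Fin N → Fin N → ℝ)
    (hsym : ∀ i j, w i j = w j i) (hnn : ∀ i j, 0 ≤ w i j)
    (hdiag : ∀ i, w i i = 0)
    (hwmax : ∀ i j, w i j ≤ wmax)
    (hdeg : ∀ i, (Finset.univ.filter fun j => w i j ≠ 0).card ≤ q)
    (X₁ X₂ X₃ : Finset (Fin N))
    (h12 : Disjoint X₁ X₂) (h13 : Disjoint X₁ X₃) (h23 : Disjoint X₂ X₃)
    (hcover : X₁ ∪ X₂ ∪ X₃ = Finset.univ)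
    (hN1 : 0 < X₁.card) (hN3 : 0 < X₃.card)
    (hnoedge : ∀ i ∈ X₁, ∀ j ∈ X₃, w i j = 0)
    (hH : (lap w).IsHermitian) :
    sortedEig hH ⟨1, by omega⟩ ≤
      (q : ℝ) * wmax *
        ((X₃.card : ℝ) ^ 2 * (X₂.card : ℝ) + (X₁.card : ℝ) ^ 2 * (X₂.card : ℝ)) /
        ((X₃.card : ℝ) ^ 2 * (X₁.card : ℝ) + (X₁.card : ℝ) ^ 2 * (X₃.card : ℝ)) := by
  have hwmax0 : 0 ≤ wmax := (hnn ⟨0, by omega⟩ ⟨0, by omega⟩).trans (hwmax _ _)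
  have hrow (i : Fin N) : ∑ j, w i j ≤ q * wmax :=
    sum_le_card_support_mul (hwmax i) hwmax0 (hdeg i)
  have hquad : bottleneckVector X₁ X₃ ⬝ᵥ (lap w *ᵥ bottleneckVector X₁ X₃) ≤
      #X₂ * (q * wmax) * ((#X₃ : ℝ) ^ 2 + (#X₁ : ℝ) ^ 2) :=
    dotProduct_lap_mulVec_le hsym hnn hdiag hrow X₂
      (fun i hi => bottleneckVector_eq_zero (disjoint_right.mp h12 hi) (disjoint_left.mp h23 hi))
      (fun i j hi hj hw => bottleneckVector_eq_of_same_side h13 hcover hi hj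
        (fun hi1 hj3 => hw (hnoedge i hi1 j hj3))
        (fun hj1 hi3 => hw ((hsym i j).trans (hnoedge j hj1 i hi3))))
      (bottleneckVector_sq_le h13)
  have hspec := hH.sortedEig_one_mul_dotProduct_self_le hN (e := fun _ => 1)
    (Function.ne_iff.mpr ⟨⟨0, by omega⟩, one_ne_zero⟩) (lap_mulVec_const hdiag 1)
    (by simpa [dotProduct] using sum_bottleneckVector X₁ X₃)
  rw [dotProduct_self_bottleneckVector h13] at hspec
  have hN1' : (0 : ℝ) < #X₁ := by exact_mod_cast hN1
  have hN3' : (0 : ℝ) < #X₃ := by exact_mod_cast hN3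
  rw [le_div_iff₀ (by positivity)]
  exact hspec.trans (max_le (by positivity) (hquad.trans_eq (by ring)))
end

section
/- Let L be the weighted Laplacian of a weighted undirected graph on N ≥ 2 vertices, and let L̄ be the grounded Laplacian obtained by deleting the row and column of L corresponding to vertex 1. Then the smallest eigenvalue λ̄₁ of L̄ satisfies λ̄₁ ≤ (Σ_{k ∈ N(1)} w_{1k})/(N−1), the total weight of edges incident to vertex 1 divided by N−1. -/
/-! Test the grounded Laplacian `L̄` against the all-ones vector `𝟏`. Every row of the full
Laplacian sums to zero, so row `k` of `L̄` sums to `w₀ₖ`, and `𝟏ᵀ L̄ 𝟏` is the total weight at the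
grounded vertex. Since `L̄ - λ_min I` is positive semidefinite, `λ_min ‖𝟏‖² ≤ 𝟏ᵀ L̄ 𝟏`, and
`‖𝟏‖² = N - 1`. -/

open Matrix

open scoped MatrixOrder

lemma sortedEig_zero_le_eigenvalues {N : ℕ} {A : Matrix (Fin N) (Fin N) ℝ} (hA : A.IsHermitian)
    (h0 : 0 < N) (j : Fin N) : sortedEig hA ⟨0, h0⟩ ≤ hA.eigenvalues j := by
  simpa [sortedEig] using Tuple.monotone_sort hA.eigenvalues
    (Fin.mk_le_of_le_val (Nat.zero_le ((Tuple.sort hA.eigenvalues)⁻¹ j)))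

namespace Matrix.IsHermitian

variable {n : Type*} [Fintype n] [DecidableEq n] {A : Matrix n n ℝ} {r : ℝ}

lemma algebraMap_le_of_le_eigenvalues (hA : A.IsHermitian) (hr : ∀ i, r ≤ hA.eigenvalues i) :
    algebraMap ℝ (Matrix n n ℝ) r ≤ A := by
  rw [algebraMap_le_iff_le_spectrum (a := A) hA.isSelfAdjoint,
    hA.spectrum_real_eq_range_eigenvalues]
  rintro _ ⟨i, rfl⟩
  exact hr i

lemma mul_dotProduct_self_le_of_le_eigenvalues (hA : A.IsHermitian)
    (hr : ∀ i, r ≤ hA.eigenvalues i) (x : n → ℝ) : r * (x ⬝ᵥ x) ≤ x ⬝ᵥ (A *ᵥ x) := by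
  have h := (le_iff.mp (hA.algebraMap_le_of_le_eigenvalues hr)).dotProduct_mulVec_nonneg x
  simp only [star_trivial, sub_mulVec, dotProduct_sub, Algebra.algebraMap_eq_smul_one,
    smul_mulVec, one_mulVec, dotProduct_smul, smul_eq_mul] at h
  linarith

end Matrix.IsHermitian

lemma sortedEig_zero_mul_dotProduct_self_le {N : ℕ} {A : Matrix (Fin N) (Fin N) ℝ}
    (hA : A.IsHermitian) (h0 : 0 < N) (x : Fin N → ℝ) :
    sortedEig hA ⟨0, h0⟩ * (x ⬝ᵥ x) ≤ x ⬝ᵥ (A *ᵥ x) :=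
  hA.mul_dotProduct_self_le_of_le_eigenvalues (sortedEig_zero_le_eigenvalues hA h0) x

lemma sum_lap_row {N : ℕ} (w : Fin N → Fin N → ℝ) (i : Fin N) : ∑ j, lap w i j = w i i := by
  have off_diag : ∀ j ∈ ({i}ᶜ : Finset (Fin N)), lap w i j = -w i j := fun j hj => by
    simp [lap, Ne.symm (Finset.mem_compl.mp hj ∘ Finset.mem_singleton.mpr)]
  rw [Fintype.sum_eq_add_sum_compl i, Finset.sum_congr rfl off_diag, Finset.sum_neg_distrib]
  simp [lap, Fintype.sum_eq_add_sum_compl i (w i)]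

lemma sum_lap_submatrix_succ_row {M : ℕ} (w : Fin (M + 1) → Fin (M + 1) → ℝ) (i : Fin M) :
    ∑ j, (lap w).submatrix Fin.succ Fin.succ i j = w i.succ i.succ + w i.succ 0 := by
  have h := sum_lap_row w i.succ
  have h0 : lap w i.succ 0 = -w i.succ 0 := by simp [lap, Fin.succ_ne_zero]
  rw [Fin.sum_univ_succ, h0] at h
  simp only [submatrix_apply]
  linarith

lemma one_dotProduct_lap_submatrix_succ_mulVec_one {M : ℕ} (w : Fin (M + 1) → Fin (M + 1) → ℝ)
    (hsym : ∀ i j, w i j = w j i) (hdiag : ∀ i, w i i = 0) :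
    1 ⬝ᵥ ((lap w).submatrix Fin.succ Fin.succ *ᵥ 1) = ∑ k, w 0 k := by
  simp only [one_dotProduct, mulVec, dotProduct_one, sum_lap_submatrix_succ_row, hdiag, zero_add]
  rw [Fin.sum_univ_succ, hdiag, zero_add]
  exact Finset.sum_congr rfl fun i _ => hsym _ _

/-- The smallest eigenvalue of the grounded Laplacian (vertex 0 removed) is at
most the total weight of the edges incident to the grounded vertex divided by
N − 1. Here the graph has N = M + 1 ≥ 2 vertices. -/
theorem stmt4 {M : ℕ} (hM : 1 ≤ M)
    (w : Fin (M + 1) → Fin (M + 1) → ℝ)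
    (hsym : ∀ i j, w i j = w j i)
    (hdiag : ∀ i, w i i = 0)
    (hH : ((lap w).submatrix Fin.succ Fin.succ).IsHermitian) :
    sortedEig hH ⟨0, by omega⟩ ≤ (∑ k, w 0 k) / (M : ℝ) := by
  have h := sortedEig_zero_mul_dotProduct_self_le hH hM 1
  rw [one_dotProduct_lap_submatrix_succ_mulVec_one w hsym hdiag, one_dotProduct] at h
  rw [le_div_iff₀ (by exact_mod_cast hM)]
  simpa using h
end
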